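/- arXiv:0905.2092 — 3 statements merged into one kernel-verified Lean document; each statement's English description precedes it below -/
import Mathlib

section
/- For every integer t ≥ 0 and every R_{2t} ∈ 𝒫_{2t}, one has Δ^{t+1}(x² R_{2t}) = 2(t+1)(M + 2t) Δ^t(R_{2t}). -/
open scoped TensorProduct
open MvPolynomial

noncomputable section

variable (m n : ℕ)

/-- The Grassmann algebra Λ_{2n} on `2n` anticommuting generators. -/
abbrev Grass (n : ℕ) := ExteriorAlgebra ℝ (Fin (2*n) → ℝ)

/-- The algebra of super-polynomials 𝒫 = ℝ[x_1,…,x_m] ⊗ Λ_{2n}. -/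
abbrev SuperPoly (m n : ℕ) := MvPolynomial (Fin m) ℝ ⊗[ℝ] Grass n

/-- The fermionic generator x`_i. -/
def fgen (i : Fin (2*n)) : Grass n :=
  ExteriorAlgebra.ι ℝ (Pi.single i (1:ℝ))

/-- The fermionic partial derivative ∂_{x`_i}, the odd derivation with
∂_{x`_i}(x`_j) = δ_{ij}: contraction with the i-th dual basis vector. -/
def fpderiv (i : Fin (2*n)) : Grass n →ₗ[ℝ] Grass n :=
  CliffordAlgebra.contractLeft (LinearMap.proj i)

/-- The fermionic Laplace operator on Λ_{2n}. -/
def lapF : Grass n →ₗ[ℝ] Grass n :=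
  (4:ℝ) • ∑ j : Fin n,
    (fpderiv n ⟨2*j.1, by omega⟩) ∘ₗ (fpderiv n ⟨2*j.1+1, by omega⟩)

/-- The bosonic Laplace operator Δ_b = −∑ ∂_{x_j}² on ℝ[x_1,…,x_m]. -/
def lapB : MvPolynomial (Fin m) ℝ →ₗ[ℝ] MvPolynomial (Fin m) ℝ :=
  - ∑ j : Fin m, (pderiv j).toLinearMap ∘ₗ (pderiv j).toLinearMap

/-- The super Laplace operator Δ = Δ_b + Δ_f on 𝒫. -/
def lap : SuperPoly m n →ₗ[ℝ] SuperPoly m n :=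
  LinearMap.rTensor (Grass n) (lapB m) + LinearMap.lTensor (MvPolynomial (Fin m) ℝ) (lapF n)

/-- x̲² = −∑ x_j². -/
def rb2 : MvPolynomial (Fin m) ℝ := - ∑ j : Fin m, (X j)^2

/-- x`² = ∑_{j=1}^n x`_{2j−1} x`_{2j}. -/
def rf2 : Grass n := ∑ j : Fin n, fgen n ⟨2*j.1, by omega⟩ * fgen n ⟨2*j.1+1, by omega⟩

/-- The generalized norm squared x² = x̲² + x`² as an element of 𝒫. -/
def r2 : SuperPoly m n := (rb2 m) ⊗ₜ 1 + 1 ⊗ₜ (rf2 n)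

/-- The grade-`i` part of the Grassmann algebra. -/
def fgrade (i : ℕ) : Submodule ℝ (Grass n) :=
  (LinearMap.range (ExteriorAlgebra.ι ℝ (M := Fin (2*n) → ℝ)))^i

/-- The space 𝒫_k of super-polynomials homogeneous of total degree k. -/
def P (k : ℕ) : Submodule ℝ (SuperPoly m n) :=
  ⨆ i : Fin (k+1), Submodule.map₂ (TensorProduct.mk ℝ _ _)
    (homogeneousSubmodule (Fin m) ℝ (k - i.1)) (fgrade n i.1)

/-- The space ℋ_k of spherical harmonics of degree k. -/
def H (k : ℕ) : Submodule ℝ (SuperPoly m n) :=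
  P m n k ⊓ LinearMap.ker (lap m n)

/-- The super-dimension M = m − 2n. -/
def sdim : ℤ := (m : ℤ) - 2*n

/-!
On `p ⊗ g` with `p` homogeneous of degree `a` and `g` of Grassmann degree `b`, the bosonic and
fermionic Euler operators act by `a` and `b`, which reduces the commutator of `Δ` with
multiplication by `x²` to the scalar `2m + 4a + 4b − 4n`; hence `Δ (x² R) = x² Δ R + (2M + 4k) R`
on `𝒫_k`. As `Δ` maps `𝒫_{k+2}` into `𝒫_k` and kills `𝒫_0`, induction on `t` gives the theorem,
the coefficients adding up as `2t(M + 2t − 2) + (2M + 8t) = 2(t + 1)(M + 2t)`.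
-/

namespace ExteriorAlgebra

open CliffordAlgebra

variable {R M : Type*} [CommRing R] [AddCommGroup M] [Module R M]

theorem contractLeft_eq_zero_of_mem_exteriorPower_zero (d : Module.Dual R M)
    {x : ExteriorAlgebra R M} (hx : x ∈ ⋀[R]^0 M) : contractLeft d x = 0 := by
  rw [exteriorPower, pow_zero, Submodule.mem_one] at hx
  obtain ⟨r, rfl⟩ := hx
  exact contractLeft_algebraMap _ d r

theorem contractLeft_mem_exteriorPower (d : Module.Dual R M) :
    ∀ {k : ℕ} {x : ExteriorAlgebra R M}, x ∈ ⋀[R]^(k + 1) M → contractLeft d x ∈ ⋀[R]^k M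
  | k, x, hx => by
    rw [exteriorPower, pow_succ'] at hx
    refine Submodule.mul_induction_on hx (fun _ ⟨v, hv⟩ y hy => ?_)
      fun _ _ => by rw [map_add]; exact add_mem
    rw [← hv, contractLeft_ι_mul]
    refine sub_mem (Submodule.smul_mem _ _ hy) ?_
    cases k with
    | zero => rw [contractLeft_eq_zero_of_mem_exteriorPower_zero d hy, mul_zero]; exact zero_mem _
    | succ k =>
      rw [exteriorPower, pow_succ']
      exact Submodule.mul_mem_mul ⟨v, rfl⟩ (contractLeft_mem_exteriorPower d hy)

theorem sum_ι_mul_contractLeft_of_mem_exteriorPower {I : Type*} [Fintype I]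
    (b : Module.Basis I R M) :
    ∀ {k : ℕ} {x : ExteriorAlgebra R M}, x ∈ ⋀[R]^k M →
      ∑ i, ι R (b i) * contractLeft (b.coord i) x = k • x
  | 0, x, hx => by simp [contractLeft_eq_zero_of_mem_exteriorPower_zero _ hx]
  | k + 1, x, hx => by
    rw [exteriorPower, pow_succ'] at hx
    refine Submodule.mul_induction_on hx (fun _ ⟨v, hv⟩ y hy => ?_) fun x y hx hy => ?_
    · subst hv
      have hv : ∑ i, b.coord i v • ι R (b i) = ι R v := by
        simp only [Module.Basis.coord_apply, ← map_smul, ← map_sum, b.sum_repr]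
      have hanti : ∀ i, ι R (b i) * (ι R v * contractLeft (b.coord i) y) =
          -(ι R v * (ι R (b i) * contractLeft (b.coord i) y)) := fun i => by
        rw [← mul_assoc, ← mul_assoc, ← neg_mul, eq_neg_of_add_eq_zero_left (ι_add_mul_swap _ _)]
      have hsmul : ∀ i, ι R (b i) * (b.coord i v • y) = (b.coord i v • ι R (b i)) * y :=
        fun i => by rw [mul_smul_comm, smul_mul_assoc]
      simp only [contractLeft_ι_mul, mul_sub, hanti, sub_neg_eq_add, Finset.sum_add_distrib, hsmul]
      rw [← Finset.sum_mul, hv, ← Finset.mul_sum, sum_ι_mul_contractLeft_of_mem_exteriorPower b hy,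
        mul_smul_comm, add_smul, one_smul, add_comm]
    · simp only [map_add, mul_add, Finset.sum_add_distrib, hx, hy, smul_add]

end ExteriorAlgebra

section Fermionic

variable {n}

def evenIdx (j : Fin n) : Fin (2 * n) := ⟨2 * j, by omega⟩

def oddIdx (j : Fin n) : Fin (2 * n) := ⟨2 * j + 1, by omega⟩

@[simp] lemma evenIdx_inj {j k : Fin n} : evenIdx j = evenIdx k ↔ j = k := by
  simp [evenIdx, Fin.ext_iff]

@[simp] lemma oddIdx_inj {j k : Fin n} : oddIdx j = oddIdx k ↔ j = k := by
  simp [oddIdx, Fin.ext_iff]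

@[simp] lemma evenIdx_ne_oddIdx (j k : Fin n) : evenIdx j ≠ oddIdx k := by
  simp only [evenIdx, oddIdx, ne_eq, Fin.ext_iff]; omega

@[simp] lemma oddIdx_ne_evenIdx (j k : Fin n) : oddIdx j ≠ evenIdx k :=
  (evenIdx_ne_oddIdx k j).symm

lemma sum_univ_eq_sum_evenIdx_add_oddIdx {A : Type*} [AddCommMonoid A] (f : Fin (2 * n) → A) :
    ∑ i, f i = ∑ j, (f (evenIdx j) + f (oddIdx j)) := by
  let e : Fin n × Fin 2 ≃ Fin (2 * n) := finProdFinEquiv.trans (finCongr (Nat.mul_comm n 2))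
  rw [← e.sum_comp, Fintype.sum_prod_type]
  refine Finset.sum_congr rfl fun j _ => ?_
  rw [Fin.sum_univ_two]
  congr 2 <;> ext <;> simp [e, evenIdx, oddIdx, Nat.mul_comm, Nat.add_comm]

lemma lapF_apply (g : Grass n) :
    lapF n g = (4 : ℝ) • ∑ j, fpderiv n (evenIdx j) (fpderiv n (oddIdx j) g) := by
  simp [lapF, evenIdx, oddIdx]

lemma rf2_eq : rf2 n = ∑ j, fgen n (evenIdx j) * fgen n (oddIdx j) := rfl

lemma fgen_eq_basisFun (i : Fin (2 * n)) :
    fgen n i = ExteriorAlgebra.ι ℝ (Pi.basisFun ℝ _ i) := by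
  rw [fgen, Pi.basisFun_apply]

lemma fpderiv_eq_basisFun_coord (i : Fin (2 * n)) :
    fpderiv n i = CliffordAlgebra.contractLeft ((Pi.basisFun ℝ _).coord i) :=
  rfl

lemma fpderiv_fgen_mul (i j : Fin (2 * n)) (g : Grass n) :
    fpderiv n i (fgen n j * g) = (if i = j then g else 0) - fgen n j * fpderiv n i g := by
  rw [fpderiv, fgen, CliffordAlgebra.contractLeft_ι_mul, LinearMap.proj_apply, Pi.single_apply]
  split_ifs <;> simp

lemma fpderiv_mem_fgrade {b : ℕ} (i : Fin (2 * n)) {g : Grass n} (hg : g ∈ fgrade n b) :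
    fpderiv n i g ∈ fgrade n (b - 1) := by
  cases b with
  | zero =>
    rw [fpderiv, ExteriorAlgebra.contractLeft_eq_zero_of_mem_exteriorPower_zero _ hg]
    exact zero_mem _
  | succ b => exact ExteriorAlgebra.contractLeft_mem_exteriorPower _ hg

lemma lapF_mem_fgrade {b : ℕ} {g : Grass n} (hg : g ∈ fgrade n b) :
    lapF n g ∈ fgrade n (b - 2) := by
  rw [lapF_apply]
  exact Submodule.smul_mem _ _ (Submodule.sum_mem _ fun j _ =>
    fpderiv_mem_fgrade _ (fpderiv_mem_fgrade _ hg))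

lemma lapF_eq_zero_of_mem_fgrade {b : ℕ} {g : Grass n} (hg : g ∈ fgrade n b) (hb : b < 2) :
    lapF n g = 0 := by
  have hg' : ∀ i, fpderiv n i g ∈ fgrade n 0 := fun i => by
    simpa [show b - 1 = 0 by omega] using fpderiv_mem_fgrade i hg
  rw [lapF_apply, Finset.sum_eq_zero fun j _ => ?_, smul_zero]
  exact ExteriorAlgebra.contractLeft_eq_zero_of_mem_exteriorPower_zero _ (hg' (oddIdx j))

lemma sum_fgen_mul_fpderiv {b : ℕ} {g : Grass n} (hg : g ∈ fgrade n b) :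
    ∑ j, (fgen n (evenIdx j) * fpderiv n (evenIdx j) g +
      fgen n (oddIdx j) * fpderiv n (oddIdx j) g) = (b : ℝ) • g := by
  rw [← sum_univ_eq_sum_evenIdx_add_oddIdx (fun i => fgen n i * fpderiv n i g),
    Nat.cast_smul_eq_nsmul]
  simp only [fgen_eq_basisFun, fpderiv_eq_basisFun_coord]
  exact ExteriorAlgebra.sum_ι_mul_contractLeft_of_mem_exteriorPower _ hg

lemma fpderiv_fpderiv_fgen_mul_fgen_mul (j k : Fin n) (g : Grass n) :
    fpderiv n (evenIdx j) (fpderiv n (oddIdx j) (fgen n (evenIdx k) * (fgen n (oddIdx k) * g))) =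
      fgen n (evenIdx k) * (fgen n (oddIdx k) * fpderiv n (evenIdx j) (fpderiv n (oddIdx j) g)) +
        if j = k then
          fgen n (evenIdx j) * fpderiv n (evenIdx j) g +
            fgen n (oddIdx j) * fpderiv n (oddIdx j) g - g
        else 0 := by
  by_cases hjk : j = k
  · subst hjk
    simp only [fpderiv_fgen_mul, evenIdx_ne_oddIdx, oddIdx_ne_evenIdx, if_true, if_false, map_sub,
      map_zero, mul_sub, mul_zero]
    abel
  · simp [fpderiv_fgen_mul, hjk]

lemma lapF_rf2_mul {b : ℕ} {g : Grass n} (hg : g ∈ fgrade n b) :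
    lapF n (rf2 n * g) = rf2 n * lapF n g + (4 * b - 4 * n : ℝ) • g := by
  have hpairs : ∑ j, ∑ k, fpderiv n (evenIdx j) (fpderiv n (oddIdx j)
      (fgen n (evenIdx k) * (fgen n (oddIdx k) * g))) =
        rf2 n * ∑ j, fpderiv n (evenIdx j) (fpderiv n (oddIdx j) g) +
          ((b : ℝ) • g - (n : ℝ) • g) := by
    simp only [fpderiv_fpderiv_fgen_mul_fgen_mul, Finset.sum_add_distrib, Finset.sum_ite_eq,
      Finset.mem_univ, if_true, Finset.sum_sub_distrib, sum_fgen_mul_fpderiv hg, Finset.sum_const,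
      Finset.card_univ, Fintype.card_fin, Nat.cast_smul_eq_nsmul]
    rw [Finset.sum_comm, rf2_eq, Finset.sum_mul]
    simp only [Finset.mul_sum, mul_assoc]
  have hexpand : rf2 n * g = ∑ k, fgen n (evenIdx k) * (fgen n (oddIdx k) * g) := by
    simp only [rf2_eq, Finset.sum_mul, mul_assoc]
  rw [lapF_apply, lapF_apply, hexpand]
  simp only [map_sum]
  rw [hpairs, mul_smul_comm]
  module

end Fermionic

section Bosonic

variable {m}

lemma lapB_apply (p : MvPolynomial (Fin m) ℝ) : lapB m p = -∑ j, pderiv j (pderiv j p) := by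
  simp [lapB]

lemma pderiv_rb2 (j : Fin m) : pderiv j (rb2 m) = C (-2) * X j := by
  simp [rb2, pderiv_X, Pi.single_apply, mul_comm]
  exact (map_ofNat C 2).symm

lemma pderiv_pderiv_rb2_mul (j : Fin m) (p : MvPolynomial (Fin m) ℝ) :
    pderiv j (pderiv j (rb2 m * p)) =
      rb2 m * pderiv j (pderiv j p) - 4 * (X j * pderiv j p) - 2 * p := by
  simp only [Derivation.leibniz, map_add, pderiv_rb2, pderiv_C, pderiv_X_self, smul_eq_mul]
  simp only [map_neg, map_ofNat]
  ring

lemma lapB_rb2_mul {a : ℕ} {p : MvPolynomial (Fin m) ℝ} (hp : p.IsHomogeneous a) :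
    lapB m (rb2 m * p) = rb2 m * lapB m p + (2 * m + 4 * a : ℝ) • p := by
  have heuler := hp.sum_X_mul_pderiv
  simp only [lapB_apply, pderiv_pderiv_rb2_mul, Finset.sum_sub_distrib, ← Finset.mul_sum, heuler,
    Finset.sum_const, Finset.card_univ, Fintype.card_fin, nsmul_eq_mul, smul_eq_C_mul, map_add,
    map_mul, map_natCast, map_ofNat]
  ring

lemma pderiv_pderiv_eq_zero_of_isHomogeneous {a : ℕ} {p : MvPolynomial (Fin m) ℝ}
    (hp : p.IsHomogeneous a) (ha : a < 2) (j : Fin m) : pderiv j (pderiv j p) = 0 := by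
  have h0 : (pderiv j p).IsHomogeneous 0 := by simpa [show a - 1 = 0 by omega] using hp.pderiv
  rw [← totalDegree_zero_iff_isHomogeneous, totalDegree_eq_zero_iff_eq_C] at h0
  rw [h0, pderiv_C]

lemma lapB_eq_zero_of_isHomogeneous {a : ℕ} {p : MvPolynomial (Fin m) ℝ}
    (hp : p.IsHomogeneous a) (ha : a < 2) : lapB m p = 0 := by
  simp [lapB_apply, pderiv_pderiv_eq_zero_of_isHomogeneous hp ha]

lemma MvPolynomial.IsHomogeneous.lapB {a : ℕ} {p : MvPolynomial (Fin m) ℝ}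
    (hp : p.IsHomogeneous a) :
    (lapB m p).IsHomogeneous (a - 2) := by
  rw [lapB_apply]
  exact (IsHomogeneous.sum _ _ _ fun j _ => hp.pderiv.pderiv).neg

end Bosonic

section Super

variable {m n}

lemma lap_tmul (p : MvPolynomial (Fin m) ℝ) (g : Grass n) :
    lap m n (p ⊗ₜ g) = lapB m p ⊗ₜ g + p ⊗ₜ lapF n g := by
  simp [lap]

lemma r2_mul_tmul (p : MvPolynomial (Fin m) ℝ) (g : Grass n) :
    r2 m n * (p ⊗ₜ g) = (rb2 m * p) ⊗ₜ g + p ⊗ₜ (rf2 n * g) := by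
  simp [r2, add_mul]

lemma lap_r2_mul_tmul {a b : ℕ} {p : MvPolynomial (Fin m) ℝ} {g : Grass n}
    (hp : p.IsHomogeneous a) (hg : g ∈ fgrade n b) :
    lap m n (r2 m n * (p ⊗ₜ g)) =
      r2 m n * lap m n (p ⊗ₜ g) + (2 * sdim m n + 4 * (a + b) : ℝ) • (p ⊗ₜ g) := by
  simp only [r2_mul_tmul, lap_tmul, map_add, mul_add, lapB_rb2_mul hp, lapF_rf2_mul hg,
    TensorProduct.add_tmul, TensorProduct.tmul_add, ← TensorProduct.smul_tmul',
    TensorProduct.tmul_smul, sdim]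
  push_cast
  module

lemma P_le_iff {k : ℕ} {N : Submodule ℝ (SuperPoly m n)} :
    P m n k ≤ N ↔ ∀ a b, a + b = k → ∀ p : MvPolynomial (Fin m) ℝ, p.IsHomogeneous a →
      ∀ g ∈ fgrade n b, p ⊗ₜ g ∈ N := by
  simp only [P, iSup_le_iff, Submodule.map₂_le, mem_homogeneousSubmodule, TensorProduct.mk_apply]
  constructor
  · rintro h a b rfl p hp g hg
    exact h ⟨b, by omega⟩ p (by simpa using hp) g hg
  · intro h i p hp g hg
    exact h (k - i) i (by omega) p hp g hg

lemma tmul_mem_P {a b : ℕ} {p : MvPolynomial (Fin m) ℝ} (hp : p.IsHomogeneous a) {g : Grass n}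
    (hg : g ∈ fgrade n b) : p ⊗ₜ g ∈ P m n (a + b) :=
  P_le_iff.mp le_rfl a b rfl p hp g hg

lemma lap_r2_mul_of_mem_P {k : ℕ} {R : SuperPoly m n} (hR : R ∈ P m n k) :
    lap m n (r2 m n * R) = r2 m n * lap m n R + (2 * sdim m n + 4 * k : ℝ) • R := by
  let D : SuperPoly m n →ₗ[ℝ] SuperPoly m n :=
    lap m n ∘ₗ LinearMap.mulLeft ℝ (r2 m n) - LinearMap.mulLeft ℝ (r2 m n) ∘ₗ lap m n -
      (2 * sdim m n + 4 * k : ℝ) • LinearMap.id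
  suffices hD : P m n k ≤ LinearMap.ker D by
    have := hD hR
    simp only [LinearMap.mem_ker, D, LinearMap.sub_apply, LinearMap.comp_apply,
      LinearMap.mulLeft_apply, LinearMap.smul_apply, LinearMap.id_apply] at this
    rw [← sub_eq_zero, ← this]; abel
  refine P_le_iff.mpr fun a b hab p hp g hg => ?_
  simp only [LinearMap.mem_ker, D, LinearMap.sub_apply, LinearMap.comp_apply,
    LinearMap.mulLeft_apply, LinearMap.smul_apply, LinearMap.id_apply, lap_r2_mul_tmul hp hg]
  push_cast [← hab]
  abel

lemma lap_mem_P {k : ℕ} {R : SuperPoly m n} (hR : R ∈ P m n (k + 2)) : lap m n R ∈ P m n k := by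
  refine (P_le_iff (N := (P m n k).comap (lap m n))).mpr (fun a b hab p hp g hg => ?_) hR
  rw [Submodule.mem_comap, lap_tmul]
  refine add_mem ?_ ?_
  · rcases lt_or_ge a 2 with ha | ha
    · rw [lapB_eq_zero_of_isHomogeneous hp ha, TensorProduct.zero_tmul]; exact zero_mem _
    · simpa [show a - 2 + b = k by omega] using tmul_mem_P hp.lapB hg
  · rcases lt_or_ge b 2 with hb | hb
    · rw [lapF_eq_zero_of_mem_fgrade hg hb, TensorProduct.tmul_zero]; exact zero_mem _
    · simpa [show a + (b - 2) = k by omega] using tmul_mem_P hp (lapF_mem_fgrade hg)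

lemma lap_eq_zero_of_mem_P_zero {R : SuperPoly m n} (hR : R ∈ P m n 0) : lap m n R = 0 := by
  refine (P_le_iff (N := LinearMap.ker (lap m n))).mpr (fun a b hab p hp g hg => ?_) hR
  rw [LinearMap.mem_ker, lap_tmul, lapB_eq_zero_of_isHomogeneous hp (by omega),
    lapF_eq_zero_of_mem_fgrade hg (by omega), TensorProduct.zero_tmul, TensorProduct.tmul_zero,
    add_zero]

end Super

theorem lap_pow_r2_mul_general (m n : ℕ)
    (t : ℕ) (R : SuperPoly m n) (hR : R ∈ P m n (2*t)) :
    ((lap m n)^(t+1)) (r2 m n * R) =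
      ((2*((t:ℤ)+1)*(sdim m n + 2*t) : ℤ) : ℝ) • (((lap m n)^t) R) := by
  induction t generalizing R with
  | zero =>
    rw [pow_one, pow_zero, Module.End.one_apply, lap_r2_mul_of_mem_P hR,
      lap_eq_zero_of_mem_P_zero hR, mul_zero, zero_add]
    congr 1
    push_cast
    ring
  | succ t ih =>
    have hlapR : lap m n R ∈ P m n (2 * t) := lap_mem_P hR
    rw [pow_succ, Module.End.mul_apply, lap_r2_mul_of_mem_P hR, map_add, map_smul, ih _ hlapR,
      ← Module.End.mul_apply, ← pow_succ, ← add_smul]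
    congr 1
    push_cast
    ring

/-- For every integer t ≥ 0 and every R_{2t} ∈ 𝒫_{2t}, one has
Δ^{t+1}(x² R_{2t}) = 2(t+1)(M + 2t) Δ^t(R_{2t}). -/
theorem lap_pow_r2_mul (m n : ℕ) (hm : 1 ≤ m) (hn : 1 ≤ n)
    (t : ℕ) (R : SuperPoly m n) (hR : R ∈ P m n (2*t)) :
    ((lap m n)^(t+1)) (r2 m n * R) =
      ((2*((t:ℤ)+1)*(sdim m n + 2*t) : ℤ) : ℝ) • (((lap m n)^t) R) :=
  lap_pow_r2_mul_general m n t R hR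

end
end

section
/- Assume M ∉ {0, −2, −4, …}. Let H_k ∈ ℋ_k and let i, j ≥ 0 be integers. If i > j then Δ^i(x^{2j} H_k) = 0. If i ≤ j then Δ^i(x^{2j} H_k) = c_{i,j,k} x^{2(j−i)} H_k, where c_{i,j,k} = 2^i · (j!/(j−i)!) · ∏_{l=1}^{i} (2k + M + 2j − 2l). -/
open scoped TensorProduct
open MvPolynomial

noncomputable section

variable (m n : ℕ)

set_option maxHeartbeats 1000000
set_option synthInstance.maxHeartbeats 1000000

namespace SuperProof

/-- basis expansion of a vector -/
lemma sum_smul_single (N : ℕ) (v : Fin N → ℝ) :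
    ∑ i : Fin N, v i • (Pi.single i 1 : Fin N → ℝ) = v := by
  ext j
  simp [Finset.sum_apply, Pi.single_apply]

lemma fpderiv_ι_mul (n : ℕ) (i : Fin (2*n)) (v : Fin (2*n) → ℝ) (x : Grass n) :
    fpderiv n i (ExteriorAlgebra.ι ℝ v * x)
      = v i • x - ExteriorAlgebra.ι ℝ v * fpderiv n i x :=
  CliffordAlgebra.contractLeft_ι_mul _ v x

lemma fpderiv_fgen_mul (n : ℕ) (i j : Fin (2*n)) (x : Grass n) :
    fpderiv n i (fgen n j * x)
      = (if j = i then (1:ℝ) else 0) • x - fgen n j * fpderiv n i x := by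
  rw [fgen, fpderiv_ι_mul]
  simp [Pi.single_apply, eq_comm]

lemma ι_anticomm (n : ℕ) (a b : Fin (2*n) → ℝ) :
    ExteriorAlgebra.ι ℝ a * ExteriorAlgebra.ι ℝ b = - (ExteriorAlgebra.ι ℝ b * ExteriorAlgebra.ι ℝ a) := by
  refine CliffordAlgebra.ι_mul_ι_comm_of_isOrtho ?_
  simp [QuadraticMap.IsOrtho]

/-- the fermionic Euler (number) operator -/
def Nf (n : ℕ) (x : Grass n) : Grass n := ∑ i : Fin (2*n), fgen n i * fpderiv n i x

lemma Nf_grade (n : ℕ) (b : ℕ) (x : Grass n) (hx : x ∈ fgrade n b) :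
    Nf n x = (b : ℝ) • x := by
  rw [fgrade] at hx
  induction hx using Submodule.pow_induction_on_left' with
  | algebraMap r =>
      simp [Nf, fpderiv, CliffordAlgebra.contractLeft_algebraMap]
  | add x y i hx hy ihx ihy =>
      simp only [Nf, map_add, mul_add, Finset.sum_add_distrib] at *
      rw [ihx, ihy, smul_add]
  | mem_mul mv hm i x hx ih =>
      obtain ⟨v, rfl⟩ := hm
      simp only [Nf] at ih ⊢
      have key : ∀ i' : Fin (2*n), fgen n i' * fpderiv n i' (ExteriorAlgebra.ι ℝ v * x)
          = v i' • (fgen n i' * x) + ExteriorAlgebra.ι ℝ v * (fgen n i' * fpderiv n i' x) := by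
        intro i'
        rw [fpderiv_ι_mul, mul_sub, mul_smul_comm]
        congr 1
        rw [← mul_assoc, fgen, ι_anticomm, neg_mul, mul_assoc, sub_neg_eq_add]
      simp only [key, Finset.sum_add_distrib, ← Finset.mul_sum, ih]
      have hsum : ∑ i' : Fin (2*n), v i' • (fgen n i' * x)
          = ExteriorAlgebra.ι ℝ v * x := by
        simp_rw [← smul_mul_assoc, ← Finset.sum_mul]
        congr 1
        simp_rw [fgen, ← map_smul, ← map_sum, sum_smul_single]
      rw [hsum, Nat.succ_eq_add_one, mul_smul_comm]
      push_cast
      rw [add_smul, one_smul]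
      abel


lemma Dpair_Ppair (n : ℕ) (j a : Fin n) (ω : Grass n) :
    fpderiv n ⟨2*j.1, by omega⟩ (fpderiv n ⟨2*j.1+1, by omega⟩
      (fgen n ⟨2*a.1, by omega⟩ * (fgen n ⟨2*a.1+1, by omega⟩ * ω)))
    = fgen n ⟨2*a.1, by omega⟩ * (fgen n ⟨2*a.1+1, by omega⟩
        * fpderiv n ⟨2*j.1, by omega⟩ (fpderiv n ⟨2*j.1+1, by omega⟩ ω))
      + (if j = a then (fgen n ⟨2*a.1, by omega⟩ * fpderiv n ⟨2*a.1, by omega⟩ ω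
          + fgen n ⟨2*a.1+1, by omega⟩ * fpderiv n ⟨2*a.1+1, by omega⟩ ω - ω) else 0) := by
  by_cases hja : j = a
  · subst hja
    simp only [fpderiv_fgen_mul, map_sub, map_smul, mul_sub, smul_sub, mul_smul_comm,
      Fin.mk.injEq, if_pos rfl, eq_false (by omega : ¬ (2*j.1 = 2*j.1+1)),
      eq_false (by omega : ¬ (2*j.1+1 = 2*j.1)), if_true, if_false,
      zero_smul, one_smul, zero_sub, sub_zero, mul_zero, smul_zero, neg_zero, map_neg, mul_neg]
    abel
  · simp only [fpderiv_fgen_mul, map_sub, map_smul, mul_sub, smul_sub, mul_smul_comm,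
      Fin.mk.injEq, if_neg hja,
      eq_false (by omega : ¬ (2*a.1 = 2*j.1+1)),
      eq_false (by omega : ¬ (2*a.1+1 = 2*j.1)),
      eq_false (fun h => hja (Fin.ext (by omega)) : ¬ (2*a.1+1 = 2*j.1+1)),
      eq_false (fun h => hja (Fin.ext (by omega)) : ¬ (2*a.1 = 2*j.1)),
      if_false, zero_smul, one_smul, zero_sub, sub_zero, mul_zero, smul_zero, neg_zero,
      map_neg, mul_neg, add_zero]
    abel


lemma sum_range_two_mul {A : Type*} [AddCommMonoid A] (n : ℕ) (g : ℕ → A) :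
    ∑ i ∈ Finset.range (2*n), g i = ∑ j ∈ Finset.range n, (g (2*j) + g (2*j+1)) := by
  induction n with
  | zero => simp
  | succ n ih =>
      rw [Finset.sum_range_succ, ← ih, show 2*(n+1) = (2*n+1)+1 by ring,
        Finset.sum_range_succ, Finset.sum_range_succ, add_assoc]

lemma sum_fin_two_mul {A : Type*} [AddCommMonoid A] (n : ℕ) (F : Fin (2*n) → A) :
    ∑ i : Fin (2*n), F i
      = ∑ j : Fin n, (F ⟨2*j.1, by omega⟩ + F ⟨2*j.1+1, by omega⟩) := by
  classical
  let g : ℕ → A := fun i => if h : i < 2*n then F ⟨i, h⟩ else 0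
  have h1 : ∑ i : Fin (2*n), F i = ∑ i ∈ Finset.range (2*n), g i := by
    rw [Finset.sum_range fun i => g i]
    apply Finset.sum_congr rfl
    intro i _
    simp only [g, dif_pos i.2]
  have h2 : ∑ j : Fin n, (F ⟨2*j.1, by omega⟩ + F ⟨2*j.1+1, by omega⟩)
      = ∑ j ∈ Finset.range n, (g (2*j) + g (2*j+1)) := by
    rw [Finset.sum_range fun j => (g (2*j) + g (2*j+1))]
    apply Finset.sum_congr rfl
    intro j _
    have hj1 : 2*j.1 < 2*n := by omega
    have hj2 : 2*j.1+1 < 2*n := by omega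
    simp only [g, dif_pos hj1, dif_pos hj2]
  rw [h1, h2, sum_range_two_mul]

lemma lapF_apply (n : ℕ) (x : Grass n) :
    lapF n x = (4:ℝ) • ∑ j : Fin n,
      fpderiv n ⟨2*j.1, by omega⟩ (fpderiv n ⟨2*j.1+1, by omega⟩ x) := by
  simp [lapF, LinearMap.sum_apply]

lemma S_rf2 (n : ℕ) (ω : Grass n) :
    ∑ j : Fin n, fpderiv n ⟨2*j.1, by omega⟩ (fpderiv n ⟨2*j.1+1, by omega⟩ (rf2 n * ω))
      = rf2 n * (∑ j : Fin n, fpderiv n ⟨2*j.1, by omega⟩ (fpderiv n ⟨2*j.1+1, by omega⟩ ω))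
        + Nf n ω - (n : ℝ) • ω := by
  have h1 : ∀ j : Fin n,
      fpderiv n ⟨2*j.1, by omega⟩ (fpderiv n ⟨2*j.1+1, by omega⟩ (rf2 n * ω))
      = (∑ a : Fin n, fgen n ⟨2*a.1, by omega⟩ * (fgen n ⟨2*a.1+1, by omega⟩
          * fpderiv n ⟨2*j.1, by omega⟩ (fpderiv n ⟨2*j.1+1, by omega⟩ ω)))
        + (fgen n ⟨2*j.1, by omega⟩ * fpderiv n ⟨2*j.1, by omega⟩ ω
          + fgen n ⟨2*j.1+1, by omega⟩ * fpderiv n ⟨2*j.1+1, by omega⟩ ω - ω) := by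
    intro j
    rw [rf2, Finset.sum_mul]
    simp_rw [mul_assoc, map_sum, Dpair_Ppair, Finset.sum_add_distrib,
      Finset.sum_ite_eq, Finset.mem_univ, if_true]
  simp_rw [h1]
  rw [Finset.sum_add_distrib, Finset.sum_sub_distrib, Finset.sum_const, Finset.card_univ,
    Fintype.card_fin]
  have h2 : ∑ j : Fin n, (fgen n ⟨2*j.1, by omega⟩ * fpderiv n ⟨2*j.1, by omega⟩ ω
      + fgen n ⟨2*j.1+1, by omega⟩ * fpderiv n ⟨2*j.1+1, by omega⟩ ω) = Nf n ω :=
    (sum_fin_two_mul n (fun i => fgen n i * fpderiv n i ω)).symm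
  rw [h2]
  have h3 : ∑ j : Fin n, ∑ a : Fin n, fgen n ⟨2*a.1, by omega⟩ * (fgen n ⟨2*a.1+1, by omega⟩
        * fpderiv n ⟨2*j.1, by omega⟩ (fpderiv n ⟨2*j.1+1, by omega⟩ ω))
      = rf2 n * ∑ j : Fin n, fpderiv n ⟨2*j.1, by omega⟩ (fpderiv n ⟨2*j.1+1, by omega⟩ ω) := by
    rw [Finset.sum_comm, rf2, Finset.sum_mul]
    simp_rw [← Finset.mul_sum, mul_assoc]
  rw [h3, Nat.cast_smul_eq_nsmul]
  abel

lemma lapF_rf2_mul (n : ℕ) (ω : Grass n) :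
    lapF n (rf2 n * ω)
      = rf2 n * lapF n ω + (4:ℝ) • Nf n ω - ((4*n : ℕ) : ℝ) • ω := by
  rw [lapF_apply, lapF_apply, S_rf2, smul_sub, smul_add, smul_smul, mul_smul_comm]
  push_cast
  ring_nf


lemma pderiv_rb2 (m : ℕ) (j : Fin m) : pderiv j (rb2 m) = -(2 * X j) := by
  rw [rb2, map_neg, map_sum]
  rw [Finset.sum_eq_single j]
  · rw [pow_two, pderiv_mul, pderiv_X_self]; ring
  · intro b _ hb
    rw [pow_two, pderiv_mul, pderiv_X, Pi.single_eq_of_ne hb]; ring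
  · intro h; exact absurd (Finset.mem_univ j) h

lemma X_mul_pderiv_monomial (m : ℕ) (i : Fin m) (s : Fin m →₀ ℕ) (c : ℝ) :
    X i * pderiv i (monomial s c) = (s i) • monomial s c := by
  rw [pderiv_monomial]
  by_cases h : s i = 0
  · simp [h]
  · have hs : Finsupp.single i 1 + (s - Finsupp.single i 1) = s := by
      ext j
      simp only [Finsupp.add_apply, Finsupp.tsub_apply, Finsupp.single_apply]
      by_cases hj : i = j
      · subst hj; simp; omega
      · simp [hj]
    rw [X, monomial_mul, hs, smul_monomial, one_mul, nsmul_eq_mul, mul_comm]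

lemma euler_b (m : ℕ) (a : ℕ) (f : MvPolynomial (Fin m) ℝ)
    (hf : f ∈ homogeneousSubmodule (Fin m) ℝ a) :
    ∑ i : Fin m, X i * pderiv i f = (a : ℝ) • f := by
  rw [mem_homogeneousSubmodule] at hf
  conv_lhs => rw [← support_sum_monomial_coeff f]
  simp only [map_sum, Finset.mul_sum]
  rw [Finset.sum_comm]
  have : ∀ d ∈ f.support, ∑ i : Fin m, X i * pderiv i (monomial d (coeff d f))
      = (a:ℝ) • monomial d (coeff d f) := by
    intro d hd
    simp_rw [X_mul_pderiv_monomial, ← Finset.sum_smul]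
    have hdeg : ∑ i : Fin m, d i = a := by
      have h0 := hf (MvPolynomial.mem_support_iff.mp hd)
      rw [← h0, Finsupp.weight_apply, Finsupp.sum_fintype]
      · simp
      · simp
    rw [hdeg, Nat.cast_smul_eq_nsmul]
  rw [Finset.sum_congr rfl this, ← Finset.smul_sum, support_sum_monomial_coeff]

lemma lapB_apply (m : ℕ) (g : MvPolynomial (Fin m) ℝ) :
    lapB m g = -∑ j : Fin m, pderiv j (pderiv j g) := by
  simp [lapB, LinearMap.sum_apply]

lemma lapB_rb2_mul (m : ℕ) (f : MvPolynomial (Fin m) ℝ) :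
    lapB m (rb2 m * f) = rb2 m * lapB m f + (2*m) • f
      + 4 • ∑ i : Fin m, X i * pderiv i f := by
  have key : ∀ j : Fin m, pderiv j (pderiv j (rb2 m * f))
      = -(2*f) - 4 * (X j * pderiv j f) + rb2 m * pderiv j (pderiv j f) := by
    intro j
    rw [pderiv_mul, map_add, pderiv_mul, pderiv_mul, pderiv_rb2]
    have : pderiv j (-((2 : MvPolynomial (Fin m) ℝ) * X j)) = -2 := by
      rw [map_neg]
      have h2 : (C 2 : MvPolynomial (Fin m) ℝ) = 2 := map_ofNat C 2
      rw [← h2, pderiv_mul, pderiv_C, pderiv_X_self, h2]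
      simp
    rw [this]
    ring
  rw [lapB_apply, lapB_apply]
  simp_rw [key]
  rw [Finset.sum_add_distrib, Finset.sum_sub_distrib, Finset.sum_const, Finset.card_univ,
    Fintype.card_fin, ← Finset.mul_sum, ← Finset.mul_sum]
  rw [nsmul_eq_mul, nsmul_eq_mul]
  push_cast
  ring


lemma r2_mul_tmul (m n : ℕ) (g : MvPolynomial (Fin m) ℝ) (τ : Grass n) :
    r2 m n * (g ⊗ₜ[ℝ] τ) = (rb2 m * g) ⊗ₜ[ℝ] τ + g ⊗ₜ[ℝ] (rf2 n * τ) := by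
  rw [r2, add_mul, Algebra.TensorProduct.tmul_mul_tmul, Algebra.TensorProduct.tmul_mul_tmul,
    one_mul, one_mul]

lemma lap_tmul (m n : ℕ) (g : MvPolynomial (Fin m) ℝ) (τ : Grass n) :
    lap m n (g ⊗ₜ[ℝ] τ) = (lapB m g) ⊗ₜ[ℝ] τ + g ⊗ₜ[ℝ] (lapF n τ) := by
  rw [lap, LinearMap.add_apply, LinearMap.rTensor_tmul, LinearMap.lTensor_tmul]

lemma lap_r2_tmul (m n d b : ℕ) (hb : b ≤ d) (f : MvPolynomial (Fin m) ℝ)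
    (hf : f ∈ homogeneousSubmodule (Fin m) ℝ (d - b)) (ω : Grass n) (hω : ω ∈ fgrade n b) :
    lap m n (r2 m n * (f ⊗ₜ[ℝ] ω)) = r2 m n * lap m n (f ⊗ₜ[ℝ] ω)
      + (2*(m:ℝ) - 4*(n:ℝ) + 4*(d:ℝ)) • (f ⊗ₜ[ℝ] ω) := by
  have e1 : (((2*m:ℕ)):ℝ) + ((4:ℕ):ℝ)*(((d-b:ℕ)):ℝ) = 2*(m:ℝ) + 4*(d:ℝ) - 4*(b:ℝ) := by
    rw [Nat.cast_sub hb]; push_cast; ring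
  have h1 : lapB m (rb2 m * f) = rb2 m * lapB m f
      + (2*(m:ℝ) + 4*(d:ℝ) - 4*(b:ℝ)) • f := by
    rw [lapB_rb2_mul, euler_b m (d-b) f hf, ← Nat.cast_smul_eq_nsmul ℝ (2*m) f,
      ← Nat.cast_smul_eq_nsmul ℝ 4, smul_smul, add_assoc, ← add_smul, e1]
  have e2 : (4:ℝ) * ((b:ℕ):ℝ) - ((4*n:ℕ):ℝ) = 4*(b:ℝ) - 4*(n:ℝ) := by push_cast; ring
  have h2 : lapF n (rf2 n * ω) = rf2 n * lapF n ω + (4*(b:ℝ) - 4*(n:ℝ)) • ω := by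
    rw [lapF_rf2_mul, Nf_grade n b ω hω, smul_smul, add_sub_assoc, ← sub_smul, e2]
  rw [r2_mul_tmul, map_add, lap_tmul, lap_tmul, h1, h2, lap_tmul, mul_add,
    r2_mul_tmul, r2_mul_tmul]
  simp only [TensorProduct.add_tmul, TensorProduct.tmul_add, ← TensorProduct.smul_tmul',
    TensorProduct.tmul_smul]
  module

lemma lap_r2_mul (m n d : ℕ) (p : SuperPoly m n) (hp : p ∈ P m n d) :
    lap m n (r2 m n * p) = r2 m n * lap m n p
      + (2*(m:ℝ) - 4*(n:ℝ) + 4*(d:ℝ)) • p := by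
  set c : ℝ := 2*(m:ℝ) - 4*(n:ℝ) + 4*(d:ℝ) with hc
  set T : SuperPoly m n →ₗ[ℝ] SuperPoly m n :=
    (lap m n) ∘ₗ (LinearMap.mulLeft ℝ (r2 m n))
      - (LinearMap.mulLeft ℝ (r2 m n)) ∘ₗ (lap m n) - c • LinearMap.id with hT
  have hker : P m n d ≤ LinearMap.ker T := by
    rw [P, iSup_le_iff]
    intro i
    rw [Submodule.map₂_le]
    intro f hf ω hω
    rw [LinearMap.mem_ker, hT]
    simp only [LinearMap.sub_apply, LinearMap.comp_apply, LinearMap.smul_apply,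
      LinearMap.id_apply, LinearMap.mulLeft_apply, TensorProduct.mk_apply]
    rw [sub_sub, sub_eq_zero]
    exact lap_r2_tmul m n d i.1 (by omega) f hf ω hω
  have h0 := hker hp
  rw [LinearMap.mem_ker, hT] at h0
  simp only [LinearMap.sub_apply, LinearMap.comp_apply, LinearMap.smul_apply,
    LinearMap.id_apply, LinearMap.mulLeft_apply] at h0
  rw [sub_sub, sub_eq_zero] at h0
  exact h0


lemma rb2_mem (m : ℕ) : rb2 m ∈ homogeneousSubmodule (Fin m) ℝ 2 := by
  rw [mem_homogeneousSubmodule, rb2]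
  apply MvPolynomial.IsHomogeneous.neg
  apply MvPolynomial.IsHomogeneous.sum
  intro j _
  simpa using (isHomogeneous_X ℝ j).pow 2

lemma rf2_mem (n : ℕ) : rf2 n ∈ fgrade n 2 := by
  rw [rf2, fgrade]
  apply Submodule.sum_mem
  intro j _
  rw [pow_two]
  exact Submodule.mul_mem_mul ⟨_, rfl⟩ ⟨_, rfl⟩

lemma tmul_mem_P (m n d b : ℕ) (hb : b ≤ d) (f : MvPolynomial (Fin m) ℝ)
    (hf : f ∈ homogeneousSubmodule (Fin m) ℝ (d - b)) (ω : Grass n) (hω : ω ∈ fgrade n b) :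
    f ⊗ₜ[ℝ] ω ∈ P m n d := by
  have hle : Submodule.map₂ (TensorProduct.mk ℝ _ _)
      (homogeneousSubmodule (Fin m) ℝ (d - b)) (fgrade n b) ≤ P m n d := by
    rw [P]
    exact le_iSup (fun i : Fin (d+1) => Submodule.map₂ (TensorProduct.mk ℝ _ _)
      (homogeneousSubmodule (Fin m) ℝ (d - i.1)) (fgrade n i.1)) ⟨b, by omega⟩
  exact hle (Submodule.apply_mem_map₂ _ hf hω)

lemma r2_mul_mem_P (m n d : ℕ) (p : SuperPoly m n) (hp : p ∈ P m n d) :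
    r2 m n * p ∈ P m n (d+2) := by
  have hle : P m n d ≤ Submodule.comap (LinearMap.mulLeft ℝ (r2 m n)) (P m n (d+2)) := by
    rw [P, iSup_le_iff]
    intro i
    rw [Submodule.map₂_le]
    intro f hf ω hω
    rw [Submodule.mem_comap, LinearMap.mulLeft_apply, TensorProduct.mk_apply, r2_mul_tmul]
    apply add_mem
    · apply tmul_mem_P m n (d+2) i.1 (by omega)
      · rw [mem_homogeneousSubmodule] at hf ⊢
        have : (d+2) - i.1 = 2 + (d - i.1) := by omega
        rw [this]
        exact (rb2_mem m).mul hf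
      · exact hω
    · apply tmul_mem_P m n (d+2) (i.1+2) (by omega)
      · have : (d+2) - (i.1+2) = d - i.1 := by omega
        rw [this]
        exact hf
      · rw [fgrade, show i.1+2 = 2+i.1 by omega, pow_add]
        exact Submodule.mul_mem_mul (rf2_mem n) hω
  exact hle hp

end SuperProof

open SuperProof

/-- Assume M ∉ {0, −2, −4, …}. Let H_k ∈ ℋ_k and let i, j ≥ 0 be integers.
If i > j then Δ^i(x^{2j} H_k) = 0.  If i ≤ j then Δ^i(x^{2j} H_k) = c_{i,j,k} x^{2(j−i)} H_k,
where c_{i,j,k} = 2^i · (j!/(j−i)!) · ∏_{l=1}^{i} (2k + M + 2j − 2l). -/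
theorem lap_pow_r2_pow_harmonic (m n : ℕ) (hm : 1 ≤ m) (hn : 1 ≤ n)
    (hM : ∀ j : ℕ, sdim m n ≠ -(2*(j:ℤ)))
    (k : ℕ) (Hk : SuperPoly m n) (hHk : Hk ∈ H m n k) (i j : ℕ) :
    (i > j → ((lap m n)^i) ((r2 m n)^j * Hk) = 0) ∧
    (i ≤ j → ((lap m n)^i) ((r2 m n)^j * Hk) =
      ((2:ℝ)^i * ((j.factorial : ℝ) / ((j-i).factorial : ℝ)) *
        ∏ l ∈ Finset.Icc 1 i, ((2*(k:ℤ) + sdim m n + 2*(j:ℤ) - 2*(l:ℤ) : ℤ) : ℝ)) •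
        ((r2 m n)^(j-i) * Hk)) := by
  classical
  obtain ⟨hHkP, hHkker⟩ := hHk
  have hHk0 : lap m n Hk = 0 := hHkker
  have hMs : ((sdim m n : ℤ) : ℝ) = (m:ℝ) - 2*(n:ℝ) := by rw [sdim]; push_cast; ring
  have hmem : ∀ t : ℕ, (r2 m n)^t * Hk ∈ P m n (k + 2*t) := by
    intro t
    induction t with
    | zero => simpa using hHkP
    | succ t ih =>
        rw [show (r2 m n)^(t+1) * Hk = r2 m n * ((r2 m n)^t * Hk) by
            rw [pow_succ', mul_assoc],
          show k + 2*(t+1) = (k + 2*t) + 2 by ring]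
        exact r2_mul_mem_P m n _ _ ih
  set D : ℕ → ℝ := fun t => 2*(t:ℝ)*(2*(k:ℝ) + ((sdim m n : ℤ):ℝ) + 2*(t:ℝ) - 2) with hD
  have key : ∀ t : ℕ, lap m n ((r2 m n)^t * Hk) = D t • ((r2 m n)^(t-1) * Hk) := by
    intro t
    induction t with
    | zero => simp [hD, hHk0]
    | succ t ih =>
        rw [show (r2 m n)^(t+1) * Hk = r2 m n * ((r2 m n)^t * Hk) by
            rw [pow_succ', mul_assoc],
          lap_r2_mul m n (k+2*t) _ (hmem t), ih]
        cases t with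
        | zero =>
            simp only [hD, Nat.cast_zero, Nat.cast_one, mul_zero, zero_mul, zero_smul,
              mul_zero, smul_zero, zero_add, pow_zero, one_mul, Nat.sub_self,
              Nat.add_sub_cancel]
            congr 1
            rw [hMs]
            push_cast
            ring
        | succ t' =>
            rw [mul_smul_comm, show r2 m n * ((r2 m n)^(t'+1-1) * Hk) = (r2 m n)^(t'+1) * Hk by
              rw [Nat.add_sub_cancel, ← mul_assoc, ← pow_succ'], ← add_smul]
            rw [Nat.add_sub_cancel]
            congr 1
            simp only [hD]
            rw [hMs]
            push_cast
            ring
  set E : ℕ → ℝ := fun i => (2:ℝ)^i * ((j.factorial : ℝ) / ((j-i).factorial : ℝ)) *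
        ∏ l ∈ Finset.Icc 1 i, ((2*(k:ℤ) + sdim m n + 2*(j:ℤ) - 2*(l:ℤ) : ℤ) : ℝ) with hE
  have main : ∀ i' : ℕ, i' ≤ j → (((lap m n)^i') ((r2 m n)^j * Hk))
      = E i' • ((r2 m n)^(j-i') * Hk) := by
    intro i' hij
    induction i' with
    | zero =>
        have h1 : E 0 = 1 := by
          simp [hE, Finset.Icc_eq_empty (by omega : ¬ (1:ℕ) ≤ 0),
            div_self (show ((j.factorial:ℝ)) ≠ 0 from
              Nat.cast_ne_zero.mpr (Nat.factorial_ne_zero j))]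
        rw [pow_zero, Module.End.one_apply, h1, one_smul, Nat.sub_zero]
    | succ i' ih =>
        have hi' : i' ≤ j := Nat.le_of_succ_le hij
        have hi'' : i' < j := hij
        rw [pow_succ', Module.End.mul_apply, ih hi', map_smul, key (j - i'), smul_smul,
          show j - i' - 1 = j - (i'+1) by omega]
        congr 1
        have hprod : ∏ l ∈ Finset.Icc 1 (i'+1), ((2*(k:ℤ) + sdim m n + 2*(j:ℤ) - 2*(l:ℤ) : ℤ) : ℝ)
            = (∏ l ∈ Finset.Icc 1 i', ((2*(k:ℤ) + sdim m n + 2*(j:ℤ) - 2*(l:ℤ) : ℤ) : ℝ))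
              * ((2*(k:ℤ) + sdim m n + 2*(j:ℤ) - 2*((i'+1:ℕ):ℤ) : ℤ):ℝ) := by
          rw [Finset.prod_Icc_succ_top (by omega : 1 ≤ i'+1)]
        have hfacR : ((j - i').factorial : ℝ)
            = ((j - i' : ℕ):ℝ) * ((j - (i'+1)).factorial : ℝ) := by
          rw [show j - i' = (j - (i'+1)) + 1 by omega, Nat.factorial_succ]
          push_cast
          ring_nf
        simp only [hE, hD]
        rw [hprod, hfacR, Nat.cast_sub hi']
        have hfne : ((j - (i'+1)).factorial : ℝ) ≠ 0 :=
          Nat.cast_ne_zero.mpr (Nat.factorial_ne_zero _)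
        have hjine : ((j:ℝ) - (i':ℝ)) ≠ 0 := by
          have : ((j - i' : ℕ):ℝ) ≠ 0 := Nat.cast_ne_zero.mpr (by omega)
          rwa [Nat.cast_sub hi'] at this
        push_cast
        rw [hMs]
        field_simp
        ring
  constructor
  · intro hij
    obtain ⟨r, hr⟩ : ∃ r, i = r + (j+1) := ⟨i - (j+1), by omega⟩
    subst hr
    rw [pow_add, Module.End.mul_apply, pow_succ', Module.End.mul_apply, main j le_rfl,
      map_smul, Nat.sub_self, pow_zero, one_mul, hHk0, smul_zero, map_zero]
  · intro hij
    exact main i hij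

end
end

section
/- Let Q be the (m+2n) × (m+2n) real matrix Q = diag(−I_m, J). If S = [[A, B], [C, D]] is a real (m+2n) × (m+2n) block matrix (A of size m×m, B of size m×2n, C of size 2n×m, D of size 2n×2n) satisfying Sᵀ Q S = Q, then B = 0, C = 0, Aᵀ A = I_m and Dᵀ J D = J; that is, A is an orthogonal matrix and D is a symplectic matrix. -/
/-!
The form `Q = diag(-1, J)` is the difference of its skew part `diag(0, J)` and its symmetric part
`diag(1, 0)`. A matrix `S` with `Sᵀ Q S = Q` also satisfies `Sᵀ Qᵀ S = Qᵀ`, so away from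
characteristic 2 it preserves both parts separately. Expanding blocks gives `AᵀA = 1`, `BᵀB = 0`,
`CᵀJD = 0` and `DᵀJD = J`. Over `ℝ`, `BᵀB = 0` forces `B = 0`; and `DᵀJD = J` with `J` invertible
makes `JD` invertible, so `CᵀJD = 0` forces `C = 0`.
-/

set_option synthInstance.maxHeartbeats 1000000
set_option maxHeartbeats 1000000

open Matrix
noncomputable section

/-- The 2n × 2n block-diagonal matrix with n diagonal blocks [[0, 1/2], [−1/2, 0]]. -/
def Jmat (n : ℕ) : Matrix (Fin (2*n)) (Fin (2*n)) ℝ := fun i j =>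
  if j.1 = i.1 + 1 ∧ i.1 % 2 = 0 then 1/2
  else if i.1 = j.1 + 1 ∧ j.1 % 2 = 0 then -1/2
  else 0

/-- The matrix Q = diag(−I_m, J). -/
def Qmat (m n : ℕ) : Matrix (Fin m ⊕ Fin (2*n)) (Fin m ⊕ Fin (2*n)) ℝ :=
  Matrix.fromBlocks (-1) 0 0 (Jmat n)

namespace Matrix

variable {l m K : Type*} [Fintype m]

theorem transpose_mul_mul_eq_of_isSymm_of_sub [Field K] [NeZero (2 : K)] {S P R : Matrix m m K}
    (hP : P.IsSymm) (hR : Rᵀ = -R) (hS : Sᵀ * (R - P) * S = R - P) :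
    Sᵀ * P * S = P ∧ Sᵀ * R * S = R := by
  have hSt : Sᵀ * (-R - P) * S = -R - P := by
    simpa [transpose_mul, Matrix.mul_assoc, hP.eq, hR, sub_eq_add_neg] using congrArg transpose hS
  simp only [Matrix.mul_sub, Matrix.sub_mul, Matrix.mul_neg, Matrix.neg_mul] at hS hSt
  constructor <;> apply smul_right_injective _ (two_ne_zero : (2 : K) ≠ 0)
  · linear_combination (norm := module) -hS - hSt
  · linear_combination (norm := module) hS - hSt

theorem blocks_of_fromBlocks_transpose_mul_fromBlocks_neg_one_mul_eq [Fintype l] [DecidableEq l]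
    [Field K] [NeZero (2 : K)] {A : Matrix l l K} {B : Matrix l m K} {C : Matrix m l K}
    {D J : Matrix m m K} (hJ : Jᵀ = -J)
    (hS : (fromBlocks A B C D)ᵀ * fromBlocks (-1) 0 0 J * fromBlocks A B C D =
      fromBlocks (-1) 0 0 J) :
    Aᵀ * A = 1 ∧ Bᵀ * B = 0 ∧ Cᵀ * J * D = 0 ∧ Dᵀ * J * D = J := by
  have hQ : fromBlocks (-1) 0 0 J = fromBlocks 0 0 0 J - fromBlocks (1 : Matrix l l K) 0 0 0 := by
    rw [sub_eq_add_neg, fromBlocks_neg, fromBlocks_add]; simp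
  rw [hQ] at hS
  obtain ⟨hP, hR⟩ := transpose_mul_mul_eq_of_isSymm_of_sub
    (by simp [IsSymm, fromBlocks_transpose]) (by simp [fromBlocks_transpose, hJ, fromBlocks_neg]) hS
  simp only [fromBlocks_transpose, fromBlocks_multiply, fromBlocks_inj, Matrix.mul_zero,
    Matrix.zero_mul, Matrix.mul_one, add_zero, zero_add] at hP hR
  exact ⟨hP.1, hP.2.2.2, hR.2.1, hR.2.2.2⟩

theorem eq_zero_of_transpose_mul_mul_eq_zero [DecidableEq m] [CommRing K] {C : Matrix m l K}
    {D J : Matrix m m K} (hJ : IsUnit J.det) (hD : Dᵀ * J * D = J) (hC : Cᵀ * J * D = 0) :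
    C = 0 := by
  have hJD : IsUnit (J * D).det :=
    isUnit_of_mul_isUnit_right (x := Dᵀ.det) (by rwa [← det_mul, ← Matrix.mul_assoc, hD])
  rw [← transpose_eq_zero, ← mul_nonsing_inv_cancel_right _ Cᵀ hJD, ← Matrix.mul_assoc, hC,
    Matrix.zero_mul]

end Matrix

theorem Jmat_transpose (n : ℕ) : (Jmat n)ᵀ = -Jmat n := by
  ext i j
  rw [transpose_apply, neg_apply]
  simp only [Jmat]
  split_ifs <;> first | (exfalso; omega) | norm_num

theorem exists_Jmat_row_eq_single (n : ℕ) (k : Fin (2 * n)) :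
    ∃ i, ∃ c : ℝ, c ≠ 0 ∧ Jmat n i = Pi.single k c := by
  by_cases hk : k.1 % 2 = 0
  · refine ⟨⟨k + 1, by omega⟩, -1 / 2, by norm_num, funext fun j => ?_⟩
    simp only [Jmat, Pi.single_apply, Fin.ext_iff]
    split_ifs <;> first | (exfalso; omega) | rfl
  · refine ⟨⟨k - 1, by omega⟩, 1 / 2, by norm_num, funext fun j => ?_⟩
    simp only [Jmat, Pi.single_apply, Fin.ext_iff]
    split_ifs <;> first | (exfalso; omega) | rfl

theorem isUnit_Jmat (n : ℕ) : IsUnit (Jmat n) := by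
  refine mulVec_injective_iff_isUnit.mp fun v w hvw => funext fun k => ?_
  obtain ⟨i, c, hc, hi⟩ := exists_Jmat_row_eq_single n k
  have := congrFun hvw i
  simp only [mulVec, hi, single_dotProduct] at this
  exact mul_left_cancel₀ hc this

theorem block_matrix_preserving_Q_general (m n : ℕ)
    (A : Matrix (Fin m) (Fin m) ℝ) (B : Matrix (Fin m) (Fin (2*n)) ℝ)
    (C : Matrix (Fin (2*n)) (Fin m) ℝ) (D : Matrix (Fin (2*n)) (Fin (2*n)) ℝ)
    (hS : (Matrix.fromBlocks A B C D)ᵀ * Qmat m n * Matrix.fromBlocks A B C D = Qmat m n) :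
    B = 0 ∧ C = 0 ∧ Aᵀ * A = 1 ∧ Dᵀ * Jmat n * D = Jmat n := by
  obtain ⟨hA, hB, hC, hD⟩ :=
    blocks_of_fromBlocks_transpose_mul_fromBlocks_neg_one_mul_eq (Jmat_transpose n) hS
  refine ⟨conjTranspose_mul_self_eq_zero.mp ?_, ?_, hA, hD⟩
  · rwa [conjTranspose_eq_transpose_of_trivial]
  · exact eq_zero_of_transpose_mul_mul_eq_zero ((isUnit_iff_isUnit_det _).mp (isUnit_Jmat n)) hD hC

/-- if S = [[A,B],[C,D]] satisfies Sᵀ Q S = Q, then B = 0, C = 0,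
Aᵀ A = I_m (A is orthogonal) and Dᵀ J D = J (D is symplectic). -/
theorem block_matrix_preserving_Q (m n : ℕ) (hm : 1 ≤ m) (hn : 1 ≤ n)
    (A : Matrix (Fin m) (Fin m) ℝ) (B : Matrix (Fin m) (Fin (2*n)) ℝ)
    (C : Matrix (Fin (2*n)) (Fin m) ℝ) (D : Matrix (Fin (2*n)) (Fin (2*n)) ℝ)
    (hS : (Matrix.fromBlocks A B C D)ᵀ * Qmat m n * Matrix.fromBlocks A B C D = Qmat m n) :
    B = 0 ∧ C = 0 ∧ Aᵀ * A = 1 ∧ Dᵀ * Jmat n * D = Jmat n :=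
  block_matrix_preserving_Q_general m n A B C D hS

end
end
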